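/- Let D = D(𝔤) = 𝔤 ⊕ 𝔤* be the double of a finite-dimensional Lie bialgebra (𝔤, δ), with the symmetric bilinear form ⟨(x,ℓ),(y,m)⟩ = ℓ(y) + m(x). Then there is a unique Lie algebra structure on D such that: (i) 𝔤 and 𝔤* are Lie subalgebras (with 𝔤* carrying the bracket dual to δ, with opposite sign convention), and (ii) the bilinear form is invariant: ⟨[a,b],c⟩ + ⟨b,[a,c]⟩ = 0 for all a,b,c ∈ D. The mixed bracket is [x, ℓ] = ad*_x(ℓ) − ad*_ℓ(x) (coadjoint actions of 𝔤 on 𝔤* and of 𝔤* on 𝔤). -/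

import Mathlib

/- **Statement 16.**  `(𝔤, δ)` is a finite-dimensional Lie bialgebra over a
field `k`: the dual `𝔤*` carries the Lie bracket `bs` dual to the cocycle `δ`
(the cocycle property of `δ` is expressed through the standard compatibility
between `bs` and the coadjoint actions, hypothesis `hcocycle` below).
The double is `D = 𝔤 ⊕ 𝔤*` with the symmetric bilinear form
`⟨(x,ℓ),(y,m)⟩ = ℓ(y) + m(x)`. -/

/-- The coadjoint action of `x ∈ 𝔤` on `𝔤*`:  `(ad*_x ℓ)(y) = −ℓ([x,y])`. -/
noncomputable def adStarG (k : Type*) [Field k] {L : Type*} [LieRing L] [LieAlgebra k L]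
    (x : L) (ℓ : Module.Dual k L) : Module.Dual k L :=
  -(ℓ ∘ₗ (LieAlgebra.ad k L x))

/-- The coadjoint action of `ℓ ∈ 𝔤*` on `𝔤 = (𝔤*)*`:
`⟨m, ad*_ℓ x⟩ = −⟨[ℓ,m]_{𝔤*}, x⟩` (using reflexivity of `𝔤`). -/
noncomputable def adStarD (k : Type*) [Field k] {L : Type*} [LieRing L] [LieAlgebra k L]
    [FiniteDimensional k L]
    (bs : Module.Dual k L →ₗ[k] Module.Dual k L →ₗ[k] Module.Dual k L)
    (ℓ : Module.Dual k L) (x : L) : L :=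
  -(Module.evalEquiv k L).symm ((Module.Dual.eval k L x) ∘ₗ (bs ℓ))

/-- The canonical bilinear form on the double `D = 𝔤 ⊕ 𝔤*`:
`⟨(x,ℓ),(y,m)⟩ = ℓ(y) + m(x)`. -/
noncomputable def doubleForm (k : Type*) [Field k] {L : Type*} [LieRing L] [LieAlgebra k L]
    (p q : L × Module.Dual k L) : k :=
  p.2 q.1 + q.2 p.1


/-! The bracket on `𝔤 ⊕ 𝔤*` is forced: pairing `[x, ℓ]` with `𝔤` and with `𝔤*` and using
invariance gives `[x, ℓ] = ad*_x ℓ - ad*_ℓ x`, and bilinearity and antisymmetry do the rest.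
For the Jacobi identity, antisymmetry of the bracket and symmetry and invariance of the form make
`⟨J(a, b, c), d⟩` alternating in its four arguments. By nondegeneracy it therefore suffices to
know the Jacobi identities of `𝔤` and of `𝔤*` and the vanishing of `⟨J(x, y, ℓ), m⟩` for
`x, y ∈ 𝔤` and `ℓ, m ∈ 𝔤*`, which is the cocycle condition evaluated at `y`. -/

section Jacobiator

variable {R M : Type*} [CommSemiring R] [AddCommMonoid M] [Module R M]

def jacobiator (B : M →ₗ[R] M →ₗ[R] M) (a b c : M) : M :=
  B a (B b c) + B b (B c a) + B c (B a b)

variable (B : M →ₗ[R] M →ₗ[R] M)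

lemma jacobiator_rotate (a b c : M) : jacobiator B a b c = jacobiator B b c a := by
  unfold jacobiator; abel

lemma jacobiator_add_left (a a' b c : M) :
    jacobiator B (a + a') b c = jacobiator B a b c + jacobiator B a' b c := by
  simp only [jacobiator, map_add, LinearMap.add_apply]; abel

lemma jacobiator_add_mid (a b b' c : M) :
    jacobiator B a (b + b') c = jacobiator B a b c + jacobiator B a b' c := by
  simp only [jacobiator_rotate B a, jacobiator_add_left]

lemma jacobiator_add_right (a b c c' : M) :
    jacobiator B a b (c + c') = jacobiator B a b c + jacobiator B a b c' := by
  simp only [← jacobiator_rotate B _ a b, jacobiator_add_left]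

end Jacobiator

/-- By invariance, `β (jacobiator B a b c) d = -(β [b,c] [a,d] + β [c,a] [b,d] + β [a,b] [c,d])`,
which the symmetry of `β` makes antisymmetric in `c` and `d`. -/
lemma form_jacobiator_swap {R M : Type*} [CommRing R] [AddCommGroup M] [Module R M]
    (B : M →ₗ[R] M →ₗ[R] M) (β : LinearMap.BilinForm R M) (hβ : β.IsSymm)
    (hB : ∀ a b, B a b = -B b a) (hinv : ∀ a b c, β (B a b) c + β b (B a c) = 0)
    (a b c d : M) : β (jacobiator B a b c) d = -β (jacobiator B a b d) c := by
  have h (p q r s : M) : β (B p (B q r)) s = -β (B q r) (B p s) :=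
    eq_neg_of_add_eq_zero_left (hinv p (B q r) s)
  simp only [jacobiator, map_add, LinearMap.add_apply, h]
  rw [hB d a, hB d c, hB c a]
  simp only [map_neg, LinearMap.neg_apply, hβ.eq (B a d), hβ.eq (B b d)]
  ring

lemma Module.eq_of_forall_dual_apply_eq (K : Type*) {V : Type*} [CommSemiring K] [AddCommMonoid V]
    [Module K V] [Module.Projective K V] {x y : V} (h : ∀ m : Module.Dual K V, m x = m y) :
    x = y :=
  Module.eval_apply_injective K (LinearMap.ext h)

lemma LinearMap.ext_prod_of_antisymm {R M N P : Type*} [CommSemiring R] [AddCommMonoid M]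
    [Module R M] [AddCommMonoid N] [Module R N] [AddCommGroup P] [Module R P]
    {B B' : (M × N) →ₗ[R] (M × N) →ₗ[R] P}
    (hB : ∀ p q, B p q = -B q p) (hB' : ∀ p q, B' p q = -B' q p)
    (hinl : ∀ x y : M, B (x, 0) (y, 0) = B' (x, 0) (y, 0))
    (hinr : ∀ ℓ m : N, B (0, ℓ) (0, m) = B' (0, ℓ) (0, m))
    (hmixed : ∀ x ℓ, B (x, 0) (0, ℓ) = B' (x, 0) (0, ℓ)) : B = B' := by
  ext x y
  · exact hinl x y
  · exact hmixed x y
  · change B (0, x) (y, 0) = B' (0, x) (y, 0)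
    rw [hB, hB' (0, x), hmixed]
  · exact hinr x y

section Coadjoint

variable (k : Type*) [Field k] {L : Type*} [LieRing L] [LieAlgebra k L]

lemma adStarG_apply (x : L) (ℓ : Module.Dual k L) (y : L) : adStarG k x ℓ y = -ℓ ⁅x, y⁆ := rfl

noncomputable def adStarGₗ : L →ₗ[k] Module.Dual k L →ₗ[k] Module.Dual k L :=
  LinearMap.mk₂ k (adStarG k)
    (fun _ _ _ => by ext; simp only [adStarG_apply, add_lie, map_add, LinearMap.add_apply]; ring)
    (fun _ _ _ => by ext; simp only [adStarG_apply, smul_lie, map_smul, LinearMap.smul_apply]; ring)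
    (fun _ _ _ => by ext; simp only [adStarG_apply, LinearMap.add_apply]; ring)
    (fun _ _ _ => by ext; simp only [adStarG_apply, LinearMap.smul_apply]; ring)

lemma adStarGₗ_apply (x : L) (ℓ : Module.Dual k L) : adStarGₗ k x ℓ = adStarG k x ℓ := rfl

variable [FiniteDimensional k L] (bs : Module.Dual k L →ₗ[k] Module.Dual k L →ₗ[k] Module.Dual k L)

lemma apply_adStarD (ℓ m : Module.Dual k L) (x : L) : m (adStarD k bs ℓ x) = -bs ℓ m x := by
  rw [adStarD, map_neg]
  exact congrArg (-(· m)) <|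
    (Module.evalEquiv k L).apply_symm_apply (Module.Dual.eval k L x ∘ₗ bs ℓ)

noncomputable def adStarDₗ : Module.Dual k L →ₗ[k] L →ₗ[k] L :=
  LinearMap.mk₂ k (adStarD k bs)
    (fun _ _ _ => Module.eq_of_forall_dual_apply_eq k fun _ => by
      simp only [apply_adStarD, map_add, LinearMap.add_apply]; ring)
    (fun _ _ _ => Module.eq_of_forall_dual_apply_eq k fun _ => by
      simp only [apply_adStarD, map_smul, LinearMap.smul_apply]; ring)
    (fun _ _ _ => Module.eq_of_forall_dual_apply_eq k fun _ => by
      simp only [apply_adStarD, map_add]; ring)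
    (fun _ _ _ => Module.eq_of_forall_dual_apply_eq k fun _ => by
      simp only [apply_adStarD, map_smul]; ring)

lemma adStarDₗ_apply (ℓ : Module.Dual k L) (x : L) : adStarDₗ k bs ℓ x = adStarD k bs ℓ x := rfl

end Coadjoint

section Double

variable (k : Type*) [Field k] {L : Type*} [LieRing L] [LieAlgebra k L]

noncomputable def doubleFormₗ : LinearMap.BilinForm k (L × Module.Dual k L) :=
  let pairing := (LinearMap.id : Module.Dual k L →ₗ[k] Module.Dual k L).compl₁₂
    (LinearMap.snd k L (Module.Dual k L)) (LinearMap.fst k L (Module.Dual k L))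
  pairing + pairing.flip

lemma doubleFormₗ_apply (p q : L × Module.Dual k L) : doubleFormₗ k p q = doubleForm k p q := rfl

lemma doubleFormₗ_isSymm : (doubleFormₗ k : LinearMap.BilinForm k (L × Module.Dual k L)).IsSymm :=
  ⟨fun p q => add_comm (p.2 q.1) (q.2 p.1)⟩

lemma eq_zero_of_doubleForm_eq_zero {u : L × Module.Dual k L}
    (hinl : ∀ z : L, doubleForm k u (z, 0) = 0)
    (hinr : ∀ m : Module.Dual k L, doubleForm k u (0, m) = 0) : u = 0 := by
  obtain ⟨a, α⟩ := u
  have hα : α = 0 := LinearMap.ext fun z => by simpa [doubleForm] using hinl z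
  have ha : a = 0 := (Module.forall_dual_apply_eq_zero_iff k a).mp fun m => by
    simpa [doubleForm] using hinr m
  rw [ha, hα, Prod.mk_zero_zero]

variable [FiniteDimensional k L] (bs : Module.Dual k L →ₗ[k] Module.Dual k L →ₗ[k] Module.Dual k L)

noncomputable def doubleBracket :
    (L × Module.Dual k L) →ₗ[k] (L × Module.Dual k L) →ₗ[k] (L × Module.Dual k L) :=
  LinearMap.mk₂ k
    (fun p q => (⁅p.1, q.1⁆ - adStarDₗ k bs q.2 p.1 + adStarDₗ k bs p.2 q.1,
                 bs p.2 q.2 + adStarGₗ k p.1 q.2 - adStarGₗ k q.1 p.2))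
    (fun _ _ _ => by
      refine Prod.ext ?_ ?_ <;>
        simp only [Prod.fst_add, Prod.snd_add, add_lie, map_add, LinearMap.add_apply] <;> abel)
    (fun _ _ _ => by ext <;> simp [smul_sub])
    (fun _ _ _ => by
      refine Prod.ext ?_ ?_ <;>
        simp only [Prod.fst_add, Prod.snd_add, lie_add, map_add, LinearMap.add_apply] <;> abel)
    (fun _ _ _ => by ext <;> simp [smul_sub])

lemma doubleBracket_apply (p q : L × Module.Dual k L) :
    doubleBracket k bs p q = (⁅p.1, q.1⁆ - adStarD k bs q.2 p.1 + adStarD k bs p.2 q.1,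
      bs p.2 q.2 + adStarG k p.1 q.2 - adStarG k q.1 p.2) := rfl

lemma doubleBracket_inl_inl (x y : L) :
    doubleBracket k bs (x, 0) (y, 0) = (⁅x, y⁆, (0 : Module.Dual k L)) := by
  simp [doubleBracket_apply, ← adStarDₗ_apply, ← adStarGₗ_apply]

lemma doubleBracket_inr_inr (ℓ m : Module.Dual k L) :
    doubleBracket k bs (0, ℓ) (0, m) = ((0 : L), bs ℓ m) := by
  simp [doubleBracket_apply, ← adStarDₗ_apply, ← adStarGₗ_apply]

lemma doubleBracket_inl_inr (x : L) (ℓ : Module.Dual k L) :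
    doubleBracket k bs (x, 0) (0, ℓ) = (-adStarD k bs ℓ x, adStarG k x ℓ) := by
  simp [doubleBracket_apply, ← adStarDₗ_apply, ← adStarGₗ_apply]

variable {bs} (hanti : ∀ ℓ m, bs ℓ m = -bs m ℓ)
include hanti

lemma doubleBracket_antisymm (p q : L × Module.Dual k L) :
    doubleBracket k bs p q = -doubleBracket k bs q p := by
  rw [doubleBracket_apply, doubleBracket_apply, Prod.neg_mk, ← lie_skew, hanti]
  congr 1 <;> abel

lemma doubleBracket_invariant (p q r : L × Module.Dual k L) :
    doubleForm k (doubleBracket k bs p q) r + doubleForm k q (doubleBracket k bs p r) = 0 := by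
  obtain ⟨x, ℓ⟩ := p; obtain ⟨y, m⟩ := q; obtain ⟨z, n⟩ := r
  simp only [doubleForm, doubleBracket_apply, map_sub, map_add, LinearMap.sub_apply,
    LinearMap.add_apply, adStarG_apply, apply_adStarD, hanti n m, ← lie_skew z y, map_neg,
    LinearMap.neg_apply]
  ring

end Double

section DoubleJacobi

variable (k : Type*) [Field k] {L : Type*} [LieRing L] [LieAlgebra k L] [FiniteDimensional k L]
  {bs : Module.Dual k L →ₗ[k] Module.Dual k L →ₗ[k] Module.Dual k L}

lemma jacobiator_doubleBracket_inl_inl_inl (x y z : L) :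
    jacobiator (doubleBracket k bs) (x, 0) (y, 0) (z, 0) = 0 := by
  simp only [jacobiator, doubleBracket_inl_inl, Prod.mk_add_mk, lie_jacobi, add_zero,
    Prod.mk_zero_zero]

lemma jacobiator_doubleBracket_inr_inr_inr
    (hjacobi : ∀ ℓ m p, bs ℓ (bs m p) + bs m (bs p ℓ) + bs p (bs ℓ m) = 0)
    (ℓ m n : Module.Dual k L) : jacobiator (doubleBracket k bs) (0, ℓ) (0, m) (0, n) = 0 := by
  simp only [jacobiator, doubleBracket_inr_inr, Prod.mk_add_mk, hjacobi, add_zero,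
    Prod.mk_zero_zero]

variable (hanti : ∀ ℓ m, bs ℓ m = -bs m ℓ)
include hanti

lemma doubleForm_jacobiator_doubleBracket_swap (a b c d : L × Module.Dual k L) :
    doubleForm k (jacobiator (doubleBracket k bs) a b c) d
      = -doubleForm k (jacobiator (doubleBracket k bs) a b d) c :=
  form_jacobiator_swap (doubleBracket k bs) (doubleFormₗ k) (doubleFormₗ_isSymm k)
    (doubleBracket_antisymm k hanti) (doubleBracket_invariant k hanti) a b c d

variable (hcocycle : ∀ (x : L) (ℓ m : Module.Dual k L),
    adStarG k x (bs ℓ m)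
      = bs (adStarG k x ℓ) m + bs ℓ (adStarG k x m)
        + adStarG k (adStarD k bs m x) ℓ - adStarG k (adStarD k bs ℓ x) m)
include hcocycle

lemma doubleForm_jacobiator_doubleBracket_inl_inl_inr_inr (x y : L) (ℓ m : Module.Dual k L) :
    doubleForm k (jacobiator (doubleBracket k bs) (x, 0) (y, 0) (0, ℓ)) (0, m) = 0 := by
  have h1 : m ⁅x, adStarD k bs ℓ y⁆ = bs ℓ (adStarG k x m) y := by
    rw [← neg_neg (bs ℓ _ y), ← apply_adStarD, adStarG_apply, neg_neg]
  have h2 : m (adStarD k bs (adStarG k y ℓ) x) = adStarG k (adStarD k bs m x) ℓ y := by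
    rw [apply_adStarD, hanti, LinearMap.neg_apply, neg_neg, ← neg_neg (bs m _ x), ← apply_adStarD,
      adStarG_apply, adStarG_apply, ← lie_skew, map_neg, neg_neg]
  have h3 : m ⁅y, adStarD k bs ℓ x⁆ = adStarG k (adStarD k bs ℓ x) m y := by
    rw [adStarG_apply, ← lie_skew, map_neg]
  have h4 : m (adStarD k bs ℓ ⁅x, y⁆) = adStarG k x (bs ℓ m) y := by
    rw [apply_adStarD, adStarG_apply]
  rw [jacobiator, doubleBracket_inl_inl, doubleBracket_inl_inr,
    doubleBracket_antisymm k hanti (0, ℓ), doubleBracket_inl_inr]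
  simp only [doubleForm, doubleBracket_apply, Prod.fst_add, Prod.snd_add, Prod.fst_neg,
    Prod.snd_neg, ← adStarDₗ_apply, map_add, map_sub, map_neg, map_zero, LinearMap.zero_apply,
    zero_add, lie_neg, zero_lie]
  simp only [adStarDₗ_apply, h1, h2, h3, h4, apply_adStarD, hcocycle x ℓ m, LinearMap.add_apply,
    LinearMap.sub_apply]
  ring

lemma jacobiator_doubleBracket_inl_inl_inr (x y : L) (ℓ : Module.Dual k L) :
    jacobiator (doubleBracket k bs) (x, 0) (y, 0) (0, ℓ) = 0 := by
  refine eq_zero_of_doubleForm_eq_zero k (fun z => ?_)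
    (doubleForm_jacobiator_doubleBracket_inl_inl_inr_inr k hanti hcocycle x y ℓ)
  rw [doubleForm_jacobiator_doubleBracket_swap k hanti, jacobiator_doubleBracket_inl_inl_inl,
    neg_eq_zero]
  simp [doubleForm]

variable (hjacobi : ∀ ℓ m p, bs ℓ (bs m p) + bs m (bs p ℓ) + bs p (bs ℓ m) = 0)
include hjacobi

lemma jacobiator_doubleBracket_inl_inr_inr (x : L) (ℓ m : Module.Dual k L) :
    jacobiator (doubleBracket k bs) (x, 0) (0, ℓ) (0, m) = 0 := by
  refine eq_zero_of_doubleForm_eq_zero k (fun z => ?_) (fun n => ?_)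
  · rw [doubleForm_jacobiator_doubleBracket_swap k hanti, ← jacobiator_rotate _ (z, 0),
      doubleForm_jacobiator_doubleBracket_inl_inl_inr_inr k hanti hcocycle, neg_zero]
  · rw [jacobiator_rotate, doubleForm_jacobiator_doubleBracket_swap k hanti,
      jacobiator_doubleBracket_inr_inr_inr k hjacobi, neg_eq_zero]
    simp [doubleForm]

lemma jacobiator_doubleBracket (p q r : L × Module.Dual k L) :
    jacobiator (doubleBracket k bs) p q r = 0 := by
  obtain ⟨x, ℓ⟩ := p; obtain ⟨y, m⟩ := q; obtain ⟨z, n⟩ := r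
  have split (a : L) (α : Module.Dual k L) : (a, α) = (a, 0) + (0, α) := by simp
  rw [split x, split y, split z]
  simp only [jacobiator_add_left, jacobiator_add_mid, jacobiator_add_right]
  rw [← jacobiator_rotate _ (z, 0) (x, 0) (0, m), jacobiator_rotate _ (0, ℓ) (y, 0) (z, 0),
    jacobiator_rotate _ (0, ℓ) (y, 0) (0, n), ← jacobiator_rotate _ (z, 0) (0, ℓ) (0, m)]
  simp only [jacobiator_doubleBracket_inl_inl_inl, jacobiator_doubleBracket_inr_inr_inr k hjacobi,
    jacobiator_doubleBracket_inl_inl_inr k hanti hcocycle,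
    jacobiator_doubleBracket_inl_inr_inr k hanti hcocycle hjacobi, add_zero]

end DoubleJacobi

lemma bracket_inl_inr_eq_of_invariant (k : Type*) [Field k] {L : Type*} [LieRing L]
    [LieAlgebra k L] [FiniteDimensional k L]
    {bs : Module.Dual k L →ₗ[k] Module.Dual k L →ₗ[k] Module.Dual k L}
    {Br : (L × Module.Dual k L) →ₗ[k] (L × Module.Dual k L) →ₗ[k] (L × Module.Dual k L)}
    (hBanti : ∀ p q, Br p q = -Br q p)
    (hBinl : ∀ x y : L, Br (x, 0) (y, 0) = (⁅x, y⁆, (0 : Module.Dual k L)))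
    (hBinr : ∀ ℓ m : Module.Dual k L, Br (0, ℓ) (0, m) = ((0 : L), bs ℓ m))
    (hBinv : ∀ p q r, doubleForm k (Br p q) r + doubleForm k q (Br p r) = 0)
    (x : L) (ℓ : Module.Dual k L) :
    Br (x, 0) (0, ℓ) = (-adStarD k bs ℓ x, adStarG k x ℓ) := by
  ext1
  · refine Module.eq_of_forall_dual_apply_eq k fun m => ?_
    have h := hBinv (0, ℓ) (x, 0) (0, m)
    rw [hBanti, hBinr] at h
    simp only [doubleForm, Prod.fst_neg, Prod.snd_neg, map_neg, map_zero, zero_add] at h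
    rw [map_neg, apply_adStarD, neg_neg]
    linear_combination -h
  · ext y
    have h := hBinv (x, 0) (0, ℓ) (y, 0)
    rw [hBinl] at h
    simp only [doubleForm, map_zero, LinearMap.zero_apply, add_zero] at h
    rw [adStarG_apply]
    linear_combination h

/-- There is a unique Lie algebra structure on the double
`D(𝔤) = 𝔤 ⊕ 𝔤*` such that (i) `𝔤` and `𝔤*` are Lie subalgebras (with `𝔤*`
carrying the bracket dual to `δ`) and (ii) the canonical bilinear form is
invariant; moreover the mixed bracket is `[x,ℓ] = ad*_x(ℓ) − ad*_ℓ(x)`. -/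
theorem double_lie_structure_exists_unique
    (k : Type*) [Field k] {L : Type*} [LieRing L] [LieAlgebra k L] [FiniteDimensional k L]
    (bs : Module.Dual k L →ₗ[k] Module.Dual k L →ₗ[k] Module.Dual k L)
    (hanti : ∀ ℓ m, bs ℓ m = -bs m ℓ)
    (hjacobi : ∀ ℓ m p, bs ℓ (bs m p) + bs m (bs p ℓ) + bs p (bs ℓ m) = 0)
    -- the 1-cocycle (Lie bialgebra) compatibility between `⁅·,·⁆` and `bs`:
    (hcocycle : ∀ (x : L) (ℓ m : Module.Dual k L),
      adStarG k x (bs ℓ m)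
        = bs (adStarG k x ℓ) m + bs ℓ (adStarG k x m)
          + adStarG k (adStarD k bs m x) ℓ - adStarG k (adStarD k bs ℓ x) m) :
    (∃! Br : (L × Module.Dual k L) →ₗ[k] (L × Module.Dual k L) →ₗ[k] (L × Module.Dual k L),
      (∀ p q, Br p q = -Br q p) ∧
      (∀ p q r, Br p (Br q r) + Br q (Br r p) + Br r (Br p q) = 0) ∧
      (∀ x y : L, Br (x, 0) (y, 0) = (⁅x, y⁆, (0 : Module.Dual k L))) ∧
      (∀ ℓ m : Module.Dual k L, Br (0, ℓ) (0, m) = ((0 : L), bs ℓ m)) ∧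
      (∀ p q r, doubleForm k (Br p q) r + doubleForm k q (Br p r) = 0)) ∧
    (∀ Br : (L × Module.Dual k L) →ₗ[k] (L × Module.Dual k L) →ₗ[k] (L × Module.Dual k L),
      ((∀ p q, Br p q = -Br q p) ∧
       (∀ p q r, Br p (Br q r) + Br q (Br r p) + Br r (Br p q) = 0) ∧
       (∀ x y : L, Br (x, 0) (y, 0) = (⁅x, y⁆, (0 : Module.Dual k L))) ∧
       (∀ ℓ m : Module.Dual k L, Br (0, ℓ) (0, m) = ((0 : L), bs ℓ m)) ∧
       (∀ p q r, doubleForm k (Br p q) r + doubleForm k q (Br p r) = 0)) →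
      ∀ (x : L) (ℓ : Module.Dual k L),
        Br (x, 0) (0, ℓ) = (-(adStarD k bs ℓ x), adStarG k x ℓ)) := by
  refine ⟨⟨doubleBracket k bs, ⟨doubleBracket_antisymm k hanti,
    jacobiator_doubleBracket k hanti hcocycle hjacobi, doubleBracket_inl_inl k bs,
    doubleBracket_inr_inr k bs, doubleBracket_invariant k hanti⟩, ?_⟩, ?_⟩
  · rintro Br ⟨hBanti, -, hBinl, hBinr, hBinv⟩
    refine LinearMap.ext_prod_of_antisymm hBanti (doubleBracket_antisymm k hanti)
      (fun x y => ?_) (fun ℓ m => ?_) (fun x ℓ => ?_)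
    · rw [hBinl, doubleBracket_inl_inl]
    · rw [hBinr, doubleBracket_inr_inr]
    · rw [bracket_inl_inr_eq_of_invariant k hBanti hBinl hBinr hBinv, doubleBracket_inl_inr]
  · rintro Br ⟨hBanti, -, hBinl, hBinr, hBinv⟩
    exact bracket_inl_inr_eq_of_invariant k hBanti hBinl hBinr hBinv
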